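/- arXiv:2507.20330 — 4 statements merged into one kernel-verified Lean document; each statement's English description precedes it below -/
import Mathlib

section
/- Let n ≥ 2, λ > 0, and let g : (0,∞) → ℝ be nonnegative and measurable with ∫₀^∞ g(r) dr ≤ A and g(r) ≤ B for all r, where A, B > 0 satisfy A/B < √((n+2)λ/n). Then ∫₀^∞ (λrⁿ/n − r^(n+2)/(n+2)) g(r) dr ≤ B·(λ[(t+A/B)^(n+1) − t^(n+1)]/(n(n+1)) − [(t+A/B)^(n+3) − t^(n+3)]/((n+2)(n+3))), where t < √λ is such that t + A/B > √λ and λ[(t+A/B)ⁿ − tⁿ]/n = [(t+A/B)^(n+2) − t^(n+2)]/(n+2). -/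
/-!
Bathtub principle. The weight `φ r = λ rⁿ/n − r^(n+2)/(n+2)` increases on `[0, √λ]` and decreases
on `[√λ, ∞)`, and the balancing equation says `φ t = φ s =: c` for `s = t + A/B`; hence
`{r ≥ 0 | φ r ≥ c} = [t, s]`, an interval of length `A/B`. Pointwise on `r > 0`,
`φ g ≤ B (φ − c) 1_[t,s] + c g`, and integrating with `c ≥ 0`, `∫ g ≤ A = B (s − t)` gives
`∫ φ g ≤ B ∫_t^s φ`. The condition `A/B < √((n+2)λ/n)` is what forces `t > 0`: writing
`u = −t ≥ 0`, the inequality `s^(n+2) − u^(n+2) ≤ (u+s)² (sⁿ − uⁿ)` with `(u+s)² < (n+2)λ/n`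
makes `φ` strictly increase from `u` to `s`, which contradicts the balancing equation.
-/

open Real Set Filter MeasureTheory

theorem pow_add_two_sub_pow_add_two_le {n : ℕ} (hn : 1 ≤ n) {a b : ℝ} (ha : 0 ≤ a) (hab : a ≤ b) :
    b ^ (n + 2) - a ^ (n + 2) ≤ (a + b) ^ 2 * (b ^ n - a ^ n) := by
  obtain ⟨m, rfl⟩ : ∃ m, n = m + 1 := ⟨n - 1, by omega⟩
  have hdiff : (a + b) ^ 2 * (b ^ (m + 1) - a ^ (m + 1)) - (b ^ (m + 1 + 2) - a ^ (m + 1 + 2))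
      = a * b * (b ^ m * (a + 2 * b) - a ^ m * (b + 2 * a)) := by ring
  have hpow : a ^ m ≤ b ^ m := pow_le_pow_left₀ ha hab m
  have key : a ^ m * (b + 2 * a) ≤ b ^ m * (a + 2 * b) :=
    mul_le_mul hpow (by linarith) (by linarith) ((pow_nonneg ha m).trans hpow)
  have hab0 : 0 ≤ a * b := mul_nonneg ha (ha.trans hab)
  linarith [mul_le_mul_of_nonneg_left key hab0]

theorem integrableOn_Ioi_of_integrableOn_mul {φ g : ℝ → ℝ} {a B : ℝ}
    (hg : AEStronglyMeasurable g (volume.restrict (Ioi a))) (hgB : ∀ x ∈ Ioi a, ‖g x‖ ≤ B)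
    (hφ : Tendsto (fun x => ‖φ x‖) atTop atTop)
    (hφg : IntegrableOn (fun x => φ x * g x) (Ioi a)) : IntegrableOn g (Ioi a) := by
  obtain ⟨M, hM⟩ := eventually_atTop.mp (hφ.eventually_ge_atTop 1)
  have haM : a ≤ max a M := le_max_left a M
  rw [← Ioc_union_Ioi_eq_Ioi haM]
  refine IntegrableOn.union ?_ ?_
  · exact IntegrableOn.of_bound measure_Ioc_lt_top (hg.mono_set Ioc_subset_Ioi_self) B
      (ae_restrict_of_forall_mem measurableSet_Ioc fun x hx => hgB x hx.1)
  · refine (hφg.mono_set (Ioi_subset_Ioi haM)).norm.mono' (hg.mono_set (Ioi_subset_Ioi haM)) ?_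
    filter_upwards [ae_restrict_mem measurableSet_Ioi] with x hx
    calc ‖g x‖ = 1 * ‖g x‖ := (one_mul _).symm
      _ ≤ ‖φ x‖ * ‖g x‖ := by gcongr; exact hM x ((le_max_right a M).trans hx.le)
      _ = ‖φ x * g x‖ := (norm_mul _ _).symm

theorem setIntegral_mul_le_of_superlevelSet {α : Type*} [MeasurableSpace α] {μ : Measure α}
    {S I : Set α} {φ g : α → ℝ} {c A B : ℝ} (hS : MeasurableSet S) (hI : MeasurableSet I)
    (hIS : I ⊆ S) (hμI : μ I ≠ ⊤) (hc : 0 ≤ c) (hφI : ∀ x ∈ I, c ≤ φ x)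
    (hφS : ∀ x ∈ S, x ∉ I → φ x ≤ c) (hg0 : ∀ x ∈ S, 0 ≤ g x) (hgB : ∀ x ∈ I, g x ≤ B)
    (hgA : ∫ x in S, g x ∂μ ≤ A) (hAB : A ≤ B * μ.real I) (hφ : IntegrableOn φ I μ)
    (hg : IntegrableOn g S μ) (hφg : IntegrableOn (fun x => φ x * g x) S μ) :
    ∫ x in S, φ x * g x ∂μ ≤ B * ∫ x in I, φ x ∂μ := by
  have hφc : IntegrableOn (fun x => (φ x - c) * B) I μ :=
    (hφ.sub (integrableOn_const hμI)).mul_const B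
  have hind : IntegrableOn (I.indicator fun x => (φ x - c) * B) S μ :=
    (hφc.integrable_indicator hI).integrableOn
  have hpt : ∀ x ∈ S, φ x * g x ≤ I.indicator (fun x => (φ x - c) * B) x + c * g x := by
    intro x hx
    by_cases hxI : x ∈ I
    · rw [indicator_of_mem hxI]
      nlinarith [mul_nonneg (sub_nonneg.mpr (hφI x hxI)) (sub_nonneg.mpr (hgB x hxI))]
    · rw [indicator_of_notMem hxI]
      nlinarith [mul_nonneg (sub_nonneg.mpr (hφS x hx hxI)) (hg0 x hx)]
  calc ∫ x in S, φ x * g x ∂μ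
      ≤ ∫ x in S, (I.indicator (fun x => (φ x - c) * B) x + c * g x) ∂μ :=
        setIntegral_mono_on hφg (hind.add (hg.const_mul c)) hS hpt
    _ = B * ∫ x in I, φ x ∂μ - c * (B * μ.real I) + c * ∫ x in S, g x ∂μ := by
        rw [integral_add hind (hg.const_mul c), setIntegral_indicator hI,
          inter_eq_right.mpr hIS, integral_mul_const, integral_sub hφ (integrableOn_const hμI),
          setIntegral_const, integral_const_mul, smul_eq_mul]
        ring
    _ ≤ B * ∫ x in I, φ x ∂μ := by nlinarith [mul_le_mul_of_nonneg_left (hgA.trans hAB) hc]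

noncomputable def profile (n : ℕ) (lam r : ℝ) : ℝ := lam * r ^ n / n - r ^ (n + 2) / (n + 2)

namespace profile

variable {n : ℕ} {lam : ℝ}

theorem hasDerivAt (hn : 1 ≤ n) (r : ℝ) :
    HasDerivAt (profile n lam) (r ^ (n - 1) * (lam - r ^ 2)) r := by
  obtain ⟨m, rfl⟩ : ∃ m, n = m + 1 := ⟨n - 1, by omega⟩
  have h := (((hasDerivAt_pow (m + 1) r).const_mul lam).div_const ((m + 1 : ℕ) : ℝ)).sub
    ((hasDerivAt_pow (m + 3) r).div_const (((m + 1 : ℕ) : ℝ) + 2))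
  refine h.congr_deriv ?_
  push_cast
  field_simp
  ring

theorem continuous : Continuous (profile n lam) := by
  unfold profile; fun_prop

theorem strictMonoOn (hn : 1 ≤ n) : StrictMonoOn (profile n lam) (Icc 0 √lam) := by
  refine strictMonoOn_of_deriv_pos (convex_Icc _ _) continuous.continuousOn fun r hr => ?_
  rw [interior_Icc, mem_Ioo] at hr
  rw [(hasDerivAt hn r).deriv]
  have : r ^ 2 < lam := (lt_sqrt hr.1.le).mp hr.2
  have := pow_pos hr.1 (n - 1)
  nlinarith

theorem strictAntiOn (hn : 1 ≤ n) : StrictAntiOn (profile n lam) (Ici √lam) := by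
  refine strictAntiOn_of_deriv_neg (convex_Ici _) continuous.continuousOn fun r hr => ?_
  rw [interior_Ici, mem_Ioi] at hr
  have hr0 : 0 < r := (sqrt_nonneg lam).trans_lt hr
  rw [(hasDerivAt hn r).deriv]
  have : lam < r ^ 2 := (sqrt_lt' hr0).mp hr
  have := pow_pos hr0 (n - 1)
  nlinarith

theorem zero (hn : 1 ≤ n) : profile n lam 0 = 0 := by
  simp [profile, zero_pow (by omega : n ≠ 0)]

theorem le_iff_mem_Icc (hn : 1 ≤ n) {t s : ℝ} (ht : 0 ≤ t) (hts : t ≤ √lam) (hs : √lam ≤ s)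
    (heq : profile n lam t = profile n lam s) ⦃x : ℝ⦄ (hx : 0 ≤ x) :
    profile n lam t ≤ profile n lam x ↔ x ∈ Icc t s := by
  rcases le_total x √lam with hxl | hxl
  · rw [(strictMonoOn hn).le_iff_le ⟨ht, hts⟩ ⟨hx, hxl⟩]
    exact ⟨fun h => ⟨h, hxl.trans hs⟩, And.left⟩
  · rw [heq, (strictAntiOn hn).le_iff_ge hs hxl]
    exact ⟨fun h => ⟨hts.trans hxl, h⟩, And.right⟩

theorem tendsto_atTop (hn : 1 ≤ n) : Tendsto (profile n lam) atTop atBot := by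
  have h : Tendsto (fun r : ℝ => lam / n - r ^ 2 / (n + 2)) atTop atBot :=
    tendsto_atBot_add_const_left _ _ <| tendsto_neg_atTop_atBot.comp <|
      (tendsto_pow_atTop two_ne_zero).atTop_div_const (by positivity)
  refine ((tendsto_pow_atTop (by omega : n ≠ 0)).atTop_mul_atBot₀ h).congr fun r => ?_
  simp only [profile]
  ring

theorem integral (a b : ℝ) :
    ∫ r in a..b, profile n lam r
      = lam * (b ^ (n + 1) - a ^ (n + 1)) / (n * (n + 1))
        - (b ^ (n + 3) - a ^ (n + 3)) / ((n + 2) * (n + 3)) := by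
  have h : profile n lam = fun r => lam / n * r ^ n - ((n : ℝ) + 2)⁻¹ * r ^ (n + 2) := by
    funext r; simp only [profile]; ring
  simp only [h]
  rw [intervalIntegral.integral_sub ((intervalIntegral.intervalIntegrable_pow n).const_mul _)
    ((intervalIntegral.intervalIntegrable_pow (n + 2)).const_mul _),
    intervalIntegral.integral_const_mul, intervalIntegral.integral_const_mul, integral_pow,
    integral_pow]
  push_cast
  field_simp
  ring

theorem lt_of_sq_add_lt (hn : 1 ≤ n) {a b : ℝ} (ha : 0 ≤ a) (hab : a < b)
    (hR : (a + b) ^ 2 < (n + 2) * lam / n) : profile n lam a < profile n lam b := by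
  have hn0 : (0 : ℝ) < n := by exact_mod_cast hn
  have hpow : 0 < b ^ n - a ^ n := sub_pos.mpr (pow_lt_pow_left₀ hab ha (by omega))
  have hR' : (a + b) ^ 2 / (n + 2) < lam / n := by
    rw [div_lt_div_iff₀ (by positivity) hn0]
    rw [lt_div_iff₀ hn0] at hR
    linarith
  calc profile n lam a
      = profile n lam b - (b ^ n - a ^ n) * (lam / n) + (b ^ (n + 2) - a ^ (n + 2)) / (n + 2) := by
        simp only [profile]; ring
    _ ≤ profile n lam b - (b ^ n - a ^ n) * (lam / n) + (a + b) ^ 2 * (b ^ n - a ^ n) / (n + 2) := by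
        gcongr; exact pow_add_two_sub_pow_add_two_le hn ha hab.le
    _ < profile n lam b := by
        have := mul_lt_mul_of_pos_left hR' hpow
        rw [mul_div_assoc', mul_comm] at this
        linarith

theorem pos_of_eq_add (hn : 2 ≤ n) {t d : ℝ} (hd : d ^ 2 < (n + 2) * lam / n)
    (hs : √lam < t + d) (heq : profile n lam t = profile n lam (t + d)) : 0 < t := by
  have hn1 : 1 ≤ n := by omega
  by_contra! ht
  set s := t + d
  set u := -t
  have hs0 : 0 < s := (sqrt_nonneg lam).trans_lt hs
  have hu : 0 ≤ u := by linarith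
  have hus : (u + s) ^ 2 < (n + 2) * lam / n := by
    convert hd using 2; ring
  rcases n.even_or_odd with he | ho
  · have hφt : profile n lam t = profile n lam u := by
      simp only [profile, u, he.neg_pow, (he.add even_two).neg_pow]
    rw [hφt] at heq
    rcases lt_trichotomy u s with h | h | h
    · exact (lt_of_sq_add_lt hn1 hu h hus).ne heq
    · -- then `d = 2 * s` with `s > √lam`, which `d < √((n + 2) * lam / n) ≤ √(2 * lam)` forbids
      have hsl : lam < s ^ 2 := (sqrt_lt' hs0).mp hs
      have hn0 : (0 : ℝ) < n := by positivity
      have hn2 : (2 : ℝ) ≤ n := by exact_mod_cast hn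
      rw [h, lt_div_iff₀ hn0] at hus
      nlinarith
    · exact (lt_of_sq_add_lt hn1 hs0.le h (by rwa [add_comm])).ne heq.symm
  · have hφt : profile n lam t = -profile n lam u := by
      simp only [profile, u, ho.neg_pow, (ho.add_even even_two).neg_pow]
      ring
    have hφs : 0 < profile n lam s := by
      rw [← zero hn1]
      exact lt_of_sq_add_lt hn1 le_rfl hs0 (by nlinarith)
    have hφu : 0 ≤ profile n lam u := by
      rcases hu.eq_or_lt with h | h
      · rw [← h, zero hn1]
      · rw [← zero hn1]
        exact (lt_of_sq_add_lt hn1 le_rfl h (by nlinarith)).le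
    linarith

end profile

theorem stmt1_general (n : ℕ) (hn : 2 ≤ n) (lam A B t : ℝ)
    (hA : 0 < A) (hB : 0 < B) (hAB : A / B < Real.sqrt ((n + 2) * lam / n))
    (g : ℝ → ℝ) (hg_meas : Measurable g)
    (hg_nonneg : ∀ r ∈ Ioi (0 : ℝ), 0 ≤ g r)
    (hg_int : ∫ r in Ioi (0 : ℝ), g r ≤ A)
    (hg_bd : ∀ r, g r ≤ B)
    (ht1 : t < Real.sqrt lam) (ht2 : Real.sqrt lam < t + A / B)
    (ht3 : lam * ((t + A / B) ^ n - t ^ n) / n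
        = ((t + A / B) ^ (n + 2) - t ^ (n + 2)) / (n + 2)) :
    ∫ r in Ioi (0 : ℝ), (lam * r ^ n / n - r ^ (n + 2) / (n + 2)) * g r
      ≤ B * (lam * ((t + A / B) ^ (n + 1) - t ^ (n + 1)) / (n * (n + 1))
          - ((t + A / B) ^ (n + 3) - t ^ (n + 3)) / ((n + 2) * (n + 3))) := by
  change ∫ r in Ioi (0 : ℝ), profile n lam r * g r ≤ _
  have hn1 : 1 ≤ n := by omega
  have heq : profile n lam t = profile n lam (t + A / B) := by
    simp only [profile]; linear_combination -ht3
  have ht0 : 0 < t := profile.pos_of_eq_add hn ((lt_sqrt (by positivity)).mp hAB) ht2 heq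
  have hts : t ≤ t + A / B := le_add_of_nonneg_right (by positivity)
  have hlevel := profile.le_iff_mem_Icc hn1 ht0.le ht1.le ht2.le heq
  have hc : 0 ≤ profile n lam t := profile.zero hn1 ▸
    (profile.strictMonoOn hn1).monotoneOn ⟨le_rfl, sqrt_nonneg _⟩ ⟨ht0.le, ht1.le⟩ ht0.le
  rw [← profile.integral, intervalIntegral.integral_of_le hts, ← integral_Icc_eq_integral_Ioc]
  by_cases hφg : IntegrableOn (fun r => profile n lam r * g r) (Ioi 0)
  · have hg : IntegrableOn g (Ioi 0) :=
      integrableOn_Ioi_of_integrableOn_mul hg_meas.aestronglyMeasurable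
        (fun r hr => (norm_of_nonneg (hg_nonneg r hr)).trans_le (hg_bd r))
        (tendsto_abs_atBot_atTop.comp (profile.tendsto_atTop hn1)) hφg
    refine setIntegral_mul_le_of_superlevelSet measurableSet_Ioi measurableSet_Icc
      (fun x hx => ht0.trans_le hx.1) measure_Icc_lt_top.ne hc
      (fun x hx => (hlevel (ht0.le.trans hx.1)).mpr hx)
      (fun x hx hxI => le_of_not_ge (mt (hlevel hx.le).mp hxI)) hg_nonneg (fun x _ => hg_bd x)
      hg_int ?_ profile.continuous.integrableOn_Icc hg hφg
    rw [Real.volume_real_Icc_of_le hts, add_sub_cancel_left, mul_div_cancel₀ _ hB.ne']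
  · rw [integral_undef hφg]
    exact mul_nonneg hB.le (setIntegral_nonneg measurableSet_Icc
      fun x hx => hc.trans ((hlevel (ht0.le.trans hx.1)).mpr hx))

theorem stmt1 (n : ℕ) (hn : 2 ≤ n) (lam A B t : ℝ) (hlam : 0 < lam)
    (hA : 0 < A) (hB : 0 < B) (hAB : A / B < Real.sqrt ((n + 2) * lam / n))
    (g : ℝ → ℝ) (hg_meas : Measurable g)
    (hg_nonneg : ∀ r ∈ Ioi (0 : ℝ), 0 ≤ g r)
    (hg_int : ∫ r in Ioi (0 : ℝ), g r ≤ A)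
    (hg_bd : ∀ r, g r ≤ B)
    (ht1 : t < Real.sqrt lam) (ht2 : Real.sqrt lam < t + A / B)
    (ht3 : lam * ((t + A / B) ^ n - t ^ n) / n
        = ((t + A / B) ^ (n + 2) - t ^ (n + 2)) / (n + 2)) :
    ∫ r in Ioi (0 : ℝ), (lam * r ^ n / n - r ^ (n + 2) / (n + 2)) * g r
      ≤ B * (lam * ((t + A / B) ^ (n + 1) - t ^ (n + 1)) / (n * (n + 1))
          - ((t + A / B) ^ (n + 3) - t ^ (n + 3)) / ((n + 2) * (n + 3))) :=
  stmt1_general n hn lam A B t hA hB hAB g hg_meas hg_nonneg hg_int hg_bd ht1 ht2 ht3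
end

section
/- Let n ≥ 2, λ > 0, A, B > 0 with A/B < √((n+2)λ/n). Then there exists a unique t₀ with 0 < t₀ + A/B, t₀ < √λ < t₀ + A/B, satisfying λ[(t₀+A/B)ⁿ − t₀ⁿ]/n = [(t₀+A/B)^(n+2) − t₀^(n+2)]/(n+2). -/
/-!
Write `c = A / B`, `λ = s ^ 2` and `Φ x = λ xⁿ / n - x ^ (n + 2) / (n + 2)`, a primitive of
`x ^ (n - 1) (λ - x ^ 2)`; the equation says `Φ (t + c) = Φ t`. Since `Φ` increases on
`[0, s]`, decreases on `[s, ∞)` and satisfies `Φ x ≤ Φ |x|` for `x ^ 2 ≤ λ`, the bound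
`c < 2 s` makes `ΔΦ t = Φ (t + c) - Φ t` positive at `t = s - c` and negative at `t = s`, so
it has a root in between. For odd `n` the derivative `ΔΦ'` is negative on `(s - c, s)`; for
even `n` the function `ΔΦ` is strictly concave there, and a strictly concave function that is
nonnegative at the left endpoint vanishes at most once.
-/

open Real Set

theorem StrictConcaveOn.eq_of_map_eq_zero {f : ℝ → ℝ} {a b u v : ℝ}
    (hf : StrictConcaveOn ℝ (Icc a b) f) (ha : 0 ≤ f a) (hu : u ∈ Ioc a b) (hv : v ∈ Ioc a b)
    (hfu : f u = 0) (hfv : f v = 0) : u = v := by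
  wlog huv : u < v generalizing u v
  · rcases (not_lt.1 huv).lt_or_eq with hvu | hvu
    exacts [(this hv hu hfv hfu hvu).symm, hvu.symm]
  have hav : a < v := hu.1.trans huv
  have key := hf.lt_on_openSegment (left_mem_Icc.2 (hu.1.le.trans hu.2))
    (Ioc_subset_Icc_self hv) hav.ne (by rw [openSegment_eq_Ioo hav]; exact ⟨hu.1, huv⟩)
  rw [hfu, hfv, min_eq_right ha] at key
  exact (lt_irrefl 0 key).elim

lemma sqrt_le_two_mul {n : ℕ} {s : ℝ} (hn : 1 ≤ n) (hs : 0 ≤ s) :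
    √((n + 2) * s ^ 2 / n) ≤ 2 * s := by
  have hn' : (1 : ℝ) ≤ n := by exact_mod_cast hn
  rw [sqrt_le_left (by positivity), div_le_iff₀ (by positivity)]
  nlinarith [sq_nonneg s]

noncomputable def Φ (n : ℕ) (lam x : ℝ) : ℝ := lam * x ^ n / n - x ^ (n + 2) / (n + 2)

noncomputable def ΔΦ (n : ℕ) (lam c t : ℝ) : ℝ := Φ n lam (t + c) - Φ n lam t

section

variable {n : ℕ} {lam c s : ℝ}

lemma hasDerivAt_Φ (hn : n ≠ 0) (lam x : ℝ) :
    HasDerivAt (Φ n lam) (x ^ (n - 1) * (lam - x ^ 2)) x := by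
  have h : HasDerivAt (fun x => lam * x ^ n / n - x ^ (n + 2) / (n + 2)) _ x :=
    ((hasDerivAt_pow n x).const_mul lam |>.div_const (n : ℝ)).sub
      ((hasDerivAt_pow (n + 2) x).div_const ((n : ℝ) + 2))
  refine h.congr_deriv ?_
  obtain ⟨k, rfl⟩ := Nat.exists_eq_succ_of_ne_zero hn
  simp only [Nat.succ_sub_one]
  push_cast
  field_simp
  ring

lemma Φ_strictMonoOn (hn : n ≠ 0) (s : ℝ) : StrictMonoOn (Φ n (s ^ 2)) (Icc 0 s) := by
  refine strictMonoOn_of_deriv_pos (convex_Icc 0 s)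
    (fun x _ => (hasDerivAt_Φ hn _ x).continuousAt.continuousWithinAt) fun x hx => ?_
  rw [interior_Icc] at hx
  rw [(hasDerivAt_Φ hn _ x).deriv]
  have : 0 < s ^ 2 - x ^ 2 := by nlinarith [hx.1, hx.2]
  exact mul_pos (pow_pos hx.1 _) this

lemma Φ_strictAntiOn (hn : n ≠ 0) (hs : 0 ≤ s) : StrictAntiOn (Φ n (s ^ 2)) (Ici s) := by
  refine strictAntiOn_of_deriv_neg (convex_Ici s)
    (fun x _ => (hasDerivAt_Φ hn _ x).continuousAt.continuousWithinAt) fun x hx => ?_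
  rw [interior_Ici] at hx
  rw [(hasDerivAt_Φ hn _ x).deriv]
  have hx0 : 0 < x := hs.trans_lt hx
  have : s ^ 2 - x ^ 2 < 0 := by nlinarith [mem_Ioi.1 hx]
  exact mul_neg_of_pos_of_neg (pow_pos hx0 _) this

lemma Φ_le_Φ_abs (hn : n ≠ 0) {x : ℝ} (hx : x ^ 2 ≤ lam) : Φ n lam x ≤ Φ n lam |x| := by
  have hn' : (1 : ℝ) ≤ n := by exact_mod_cast Nat.one_le_iff_ne_zero.2 hn
  have hpow : x ^ n ≤ |x| ^ n := by rw [pow_abs]; exact le_abs_self _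
  have hfac : 0 ≤ lam / n - x ^ 2 / (n + 2) := by
    rw [sub_nonneg, div_le_div_iff₀ (by positivity) (by positivity)]
    nlinarith [sq_nonneg x]
  have key : Φ n lam |x| - Φ n lam x = (|x| ^ n - x ^ n) * (lam / n - x ^ 2 / (n + 2)) := by
    simp only [Φ, pow_add, sq_abs]
    ring
  nlinarith [mul_nonneg (sub_nonneg.2 hpow) hfac]

lemma ΔΦ_eq_zero_iff {t : ℝ} :
    ΔΦ n lam c t = 0 ↔
      lam * ((t + c) ^ n - t ^ n) / n = ((t + c) ^ (n + 2) - t ^ (n + 2)) / (n + 2) := by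
  unfold ΔΦ Φ
  constructor <;> intro h <;> linear_combination h

lemma ΔΦ_self_neg (hn : n ≠ 0) (hs : 0 ≤ s) (hc : 0 < c) : ΔΦ n (s ^ 2) c s < 0 :=
  sub_neg.2 <| Φ_strictAntiOn hn hs self_mem_Ici (by simpa using hc.le) (by linarith)

lemma ΔΦ_sub_pos (hn : n ≠ 0) (hc : 0 < c) (hcs : c < 2 * s) :
    0 < ΔΦ n (s ^ 2) c (s - c) := by
  have habs : |s - c| < s := abs_lt.2 ⟨by linarith, by linarith⟩
  have h1 := Φ_le_Φ_abs hn (lam := s ^ 2) (x := s - c) (by rw [← sq_abs]; gcongr)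
  have h2 := Φ_strictMonoOn hn s ⟨abs_nonneg _, habs.le⟩
    ⟨(abs_nonneg _).trans habs.le, le_rfl⟩ habs
  rw [ΔΦ, sub_add_cancel]
  linarith

lemma continuous_ΔΦ (n : ℕ) (lam c : ℝ) : Continuous (ΔΦ n lam c) := by
  unfold ΔΦ Φ
  fun_prop

lemma hasDerivAt_ΔΦ (hn : n ≠ 0) (lam c t : ℝ) :
    HasDerivAt (ΔΦ n lam c)
      ((t + c) ^ (n - 1) * (lam - (t + c) ^ 2) - t ^ (n - 1) * (lam - t ^ 2)) t :=
  ((hasDerivAt_Φ hn lam (t + c)).comp_add_const t c).sub (hasDerivAt_Φ hn lam t)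

lemma ΔΦ_strictAntiOn_of_odd (hn : Odd n) (hc : 0 < c) (hcs : c < 2 * s) :
    StrictAntiOn (ΔΦ n (s ^ 2) c) (Icc (s - c) s) := by
  have hn0 : n ≠ 0 := hn.pos.ne'
  refine strictAntiOn_of_deriv_neg (convex_Icc _ _) (continuous_ΔΦ n _ c).continuousOn
    fun t ht => ?_
  rw [interior_Icc] at ht
  obtain ⟨ht1, ht2⟩ := ht
  rw [(hasDerivAt_ΔΦ hn0 _ c t).deriv]
  have hright : (t + c) ^ (n - 1) * (s ^ 2 - (t + c) ^ 2) < 0 :=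
    mul_neg_of_pos_of_neg (pow_pos (by linarith) _) (by nlinarith)
  have hleft : 0 ≤ t ^ (n - 1) * (s ^ 2 - t ^ 2) :=
    mul_nonneg (Nat.Odd.sub_odd hn odd_one |>.pow_nonneg t) (by nlinarith)
  linarith

lemma ΔΦ_strictConcaveOn_of_even (hn : Even n) (hn0 : n ≠ 0) (hc : 0 < c) (hcs : c < 2 * s) :
    StrictConcaveOn ℝ (Icc (s - c) s) (ΔΦ n (s ^ 2) c) := by
  obtain ⟨m, rfl⟩ : ∃ m, n = m + 2 := ⟨n - 2, by obtain ⟨k, rfl⟩ := hn; omega⟩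
  have hm : Even m := by simpa [Nat.even_add] using hn
  set g : ℝ → ℝ := fun x => x ^ (m + 1) * (s ^ 2 - x ^ 2)
  have hg (x : ℝ) : HasDerivAt g ((m + 1) * x ^ m * (s ^ 2 - x ^ 2) - 2 * x ^ (m + 2)) x := by
    refine ((hasDerivAt_pow (m + 1) x).mul ((hasDerivAt_pow 2 x).const_sub _)).congr_deriv ?_
    push_cast
    ring
  have hderiv : deriv (ΔΦ (m + 2) (s ^ 2) c) = fun t => g (t + c) - g t :=
    funext fun t => (hasDerivAt_ΔΦ hn0 _ c t).deriv
  refine StrictAntiOn.strictConcaveOn_of_deriv (convex_Icc _ _)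
    (continuous_ΔΦ _ _ c).continuousOn ?_
  rw [hderiv, interior_Icc]
  refine strictAntiOn_of_deriv_neg (convex_Ioo _ _) (by fun_prop) fun t ht => ?_
  rw [interior_Ioo] at ht
  obtain ⟨ht1, ht2⟩ := ht
  have hd : HasDerivAt (fun t => g (t + c) - g t) _ t :=
    ((hg (t + c)).comp_add_const t c).sub (hg t)
  rw [hd.deriv]
  have hright : (t + c) ^ m * (s ^ 2 - (t + c) ^ 2) ≤ 0 :=
    mul_nonpos_of_nonneg_of_nonpos (hm.pow_nonneg _) (by nlinarith)
  have hleft : 0 ≤ t ^ m * (s ^ 2 - t ^ 2) := mul_nonneg (hm.pow_nonneg t) (by nlinarith)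
  have hpow : t ^ (m + 2) < (t + c) ^ (m + 2) := by
    rw [← (hm.add even_two).pow_abs t]
    exact pow_lt_pow_left₀ (abs_lt.2 ⟨by linarith, by linarith⟩) (abs_nonneg t) (by omega)
  have hm1 : (0 : ℝ) ≤ m + 1 := by positivity
  nlinarith [mul_nonpos_of_nonneg_of_nonpos hm1 hright, mul_nonneg hm1 hleft]

theorem existsUnique_ΔΦ_eq_zero (hn : n ≠ 0) (hc : 0 < c) (hcs : c < 2 * s) :
    ∃! t, t ∈ Ioo (s - c) s ∧ ΔΦ n (s ^ 2) c t = 0 := by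
  have hpos := ΔΦ_sub_pos hn hc hcs
  obtain ⟨t₀, ht₀, hzero⟩ := intermediate_value_Ioo' (by linarith : s - c ≤ s)
    (continuous_ΔΦ n _ c).continuousOn ⟨ΔΦ_self_neg hn (by linarith) hc, hpos⟩
  refine ⟨t₀, ⟨ht₀, hzero⟩, fun t ⟨ht, htzero⟩ => ?_⟩
  rcases n.even_or_odd with heven | hodd
  · exact (ΔΦ_strictConcaveOn_of_even heven hn hc hcs).eq_of_map_eq_zero hpos.le
      (Ioo_subset_Ioc_self ht) (Ioo_subset_Ioc_self ht₀) htzero hzero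
  · exact (ΔΦ_strictAntiOn_of_odd hodd hc hcs).injOn (Ioo_subset_Icc_self ht)
      (Ioo_subset_Icc_self ht₀) (htzero.trans hzero.symm)

end

theorem stmt2 (n : ℕ) (hn : 2 ≤ n) (lam A B : ℝ) (hlam : 0 < lam)
    (hA : 0 < A) (hB : 0 < B) (hAB : A / B < Real.sqrt ((n + 2) * lam / n)) :
    ∃! t₀ : ℝ, 0 < t₀ + A / B ∧ t₀ < Real.sqrt lam ∧ Real.sqrt lam < t₀ + A / B ∧
      lam * ((t₀ + A / B) ^ n - t₀ ^ n) / n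
        = ((t₀ + A / B) ^ (n + 2) - t₀ ^ (n + 2)) / (n + 2) := by
  obtain ⟨s, hs, rfl⟩ : ∃ s, 0 < s ∧ lam = s ^ 2 :=
    ⟨√lam, sqrt_pos.2 hlam, (sq_sqrt hlam.le).symm⟩
  have hc : 0 < A / B := div_pos hA hB
  have hcs : A / B < 2 * s := hAB.trans_le (sqrt_le_two_mul (by omega) hs.le)
  rw [sqrt_sq hs.le]
  refine (existsUnique_congr fun t => ?_).1
    (existsUnique_ΔΦ_eq_zero (by omega : n ≠ 0) hc hcs)
  rw [ΔΦ_eq_zero_iff, mem_Ioo]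
  constructor
  · rintro ⟨⟨hlow, hup⟩, heq⟩
    exact ⟨by linarith, hup, by linarith, heq⟩
  · rintro ⟨-, hup, hlow, heq⟩
    exact ⟨⟨by linarith, hup⟩, heq⟩
end

section
/- For a bounded open set Ω in ℝⁿ with n ≥ 1, the moment of inertia I(Ω) = inf_{a} ∫_Ω |x−a|² dx satisfies I(Ω) ≥ (n/(n+2))·R_Ω²·|Ω|, where R_Ω > 0 is defined by |B(0,R_Ω)| = |Ω|. -/
/-!
If `μ (ball a R) = μ Ω`, the pieces `ball a R \ Ω` and `Ω \ ball a R` have equal measure, and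
`‖x - a‖ ^ 2` is at most `R ^ 2` on the first and at least `R ^ 2` on the second; so trading one
for the other can only increase the integral (bathtub principle), and every `Ω` does at least as
badly as the ball centred at `a`. The integral over the ball is computed in polar coordinates:
`∫_{B(0,R)} ‖x‖² = |S^{d-1}| R^{d+2} / (d + 2) = d / (d + 2) · R² · |B(0,R)|`.
-/

open Set MeasureTheory Metric

section

variable {α : Type*} [MeasurableSpace α] {μ : Measure α}

theorem setIntegral_le_setIntegral_of_measure_eq {s t : Set α} {f : α → ℝ} {c : ℝ}
    (hs : MeasurableSet s) (ht : MeasurableSet t) (hμ : μ s = μ t) (hfin : μ s ≠ ⊤)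
    (hfs : IntegrableOn f s μ) (hft : IntegrableOn f t μ)
    (h_le : ∀ x ∈ s \ t, f x ≤ c) (h_ge : ∀ x ∈ t \ s, c ≤ f x) :
    ∫ x in s, f x ∂μ ≤ ∫ x in t, f x ∂μ := by
  have hsdiff : μ (s \ t) = μ (t \ s) :=
    measure_sdiff_symm hs.nullMeasurableSet ht.nullMeasurableSet hμ
      (measure_ne_top_of_subset inter_subset_left hfin)
  have hs_le : ∫ x in s \ t, f x ∂μ ≤ c * μ.real (s \ t) := by
    calc ∫ x in s \ t, f x ∂μ ≤ ∫ _ in s \ t, c ∂μ :=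
          setIntegral_mono_on (hfs.mono_set sdiff_subset)
            (integrableOn_const (measure_ne_top_of_subset sdiff_subset hfin)) (hs.diff ht) h_le
      _ = c * μ.real (s \ t) := by rw [setIntegral_const, smul_eq_mul, mul_comm]
  have ht_ge : c * μ.real (t \ s) ≤ ∫ x in t \ s, f x ∂μ := by
    calc c * μ.real (t \ s) = ∫ _ in t \ s, c ∂μ := by
          rw [setIntegral_const, smul_eq_mul, mul_comm]
      _ ≤ ∫ x in t \ s, f x ∂μ :=
          setIntegral_mono_on
            (integrableOn_const (measure_ne_top_of_subset sdiff_subset (hμ ▸ hfin)))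
            (hft.mono_set sdiff_subset) (ht.diff hs) h_ge
  calc ∫ x in s, f x ∂μ = ∫ x in s ∩ t, f x ∂μ + ∫ x in s \ t, f x ∂μ :=
        (integral_inter_add_sdiff ht hfs).symm
    _ ≤ ∫ x in s ∩ t, f x ∂μ + c * μ.real (s \ t) := by gcongr
    _ = ∫ x in t ∩ s, f x ∂μ + c * μ.real (t \ s) := by
        rw [inter_comm, measureReal_def, hsdiff, measureReal_def]
    _ ≤ ∫ x in t ∩ s, f x ∂μ + ∫ x in t \ s, f x ∂μ := by gcongr
    _ = ∫ x in t, f x ∂μ := integral_inter_add_sdiff hs hft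

end

section

variable {E : Type*} [NormedAddCommGroup E] [NormedSpace ℝ E] [FiniteDimensional ℝ E]
  [MeasurableSpace E] [BorelSpace E] (μ : Measure E) [μ.IsAddHaarMeasure]

theorem integral_norm_sq_ball_zero {R : ℝ} (hR : 0 ≤ R) :
    ∫ x in ball (0 : E) R, ‖x‖ ^ 2 ∂μ
      = (Module.finrank ℝ E / (Module.finrank ℝ E + 2) : ℝ) * R ^ 2 * μ.real (ball 0 R) := by
  nontriviality E
  set d := Module.finrank ℝ E
  have hd_pos : 0 < d := Module.finrank_pos
  have h_radial : ∫ x in ball (0 : E) R, ‖x‖ ^ 2 ∂μ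
      = ∫ x, (Iio R).indicator (· ^ 2) ‖x‖ ∂μ := by
    rw [← integral_indicator measurableSet_ball]
    congr 1 with x
    simp [indicator]
  rw [h_radial, integral_fun_norm_addHaar]
  have h_shell : ∫ y in Ioi (0 : ℝ), y ^ (d - 1) • (Iio R).indicator (· ^ 2) y
      = R ^ (d + 2) / (d + 2) := by
    have h_pow : ∀ y ∈ Ioi (0 : ℝ), y ^ (d - 1) • (Iio R).indicator (· ^ 2) y
        = (Iio R).indicator (· ^ (d + 1)) y := by
      intro y _
      by_cases hy : y ∈ Iio R
      · simp only [indicator_of_mem hy, smul_eq_mul, ← pow_add]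
        congr 1
        omega
      · simp [indicator_of_notMem hy]
    rw [setIntegral_congr_fun measurableSet_Ioi h_pow, integral_indicator measurableSet_Iio,
      Measure.restrict_restrict measurableSet_Iio, inter_comm, Ioi_inter_Iio,
      ← integral_Ioc_eq_integral_Ioo, ← intervalIntegral.integral_of_le hR, integral_pow]
    push_cast
    ring
  have h_ball : μ.real (ball (0 : E) R) = R ^ d * μ.real (ball 0 1) := by
    rw [measureReal_def, measureReal_def, Measure.addHaar_ball μ 0 hR, ENNReal.toReal_mul,
      ENNReal.toReal_ofReal (by positivity)]
  rw [h_shell, h_ball, nsmul_eq_mul, smul_eq_mul]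
  field_simp
  ring

theorem integral_norm_sub_sq_ball (a : E) {R : ℝ} (hR : 0 ≤ R) :
    ∫ x in ball a R, ‖x - a‖ ^ 2 ∂μ
      = (Module.finrank ℝ E / (Module.finrank ℝ E + 2) : ℝ) * R ^ 2 * μ.real (ball a R) := by
  have h_ball : ball a R = (· - a) ⁻¹' ball 0 R := by
    ext x
    simp [dist_eq_norm]
  rw [h_ball, (measurePreserving_sub_right μ a).setIntegral_preimage_emb
    (measurableEmbedding_subRight a) (‖·‖ ^ 2), ← h_ball, Measure.addHaar_real_ball_center,
    integral_norm_sq_ball_zero μ hR]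

theorem integral_norm_sub_sq_ball_le {Ω : Set E} (hΩ : MeasurableSet Ω)
    (hΩ_bd : Bornology.IsBounded Ω) (a : E) {R : ℝ} (hR : 0 ≤ R)
    (hvol : μ (ball a R) = μ Ω) :
    ∫ x in ball a R, ‖x - a‖ ^ 2 ∂μ ≤ ∫ x in Ω, ‖x - a‖ ^ 2 ∂μ := by
  have h_int : ∀ s : Set E, Bornology.IsBounded s → IntegrableOn (‖· - a‖ ^ 2) s μ :=
    fun s hs => ((by fun_prop : Continuous (‖· - a‖ ^ 2)).locallyIntegrable.integrableOn_isCompact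
      hs.isCompact_closure).mono_set subset_closure
  refine setIntegral_le_setIntegral_of_measure_eq (c := R ^ 2) measurableSet_ball hΩ hvol
    measure_ball_lt_top.ne (h_int _ isBounded_ball) (h_int _ hΩ_bd) ?_ ?_
  · intro x hx
    have : ‖x - a‖ < R := by simpa [dist_eq_norm] using hx.1
    gcongr
  · intro x hx
    have : R ≤ ‖x - a‖ := by simpa [dist_eq_norm] using hx.2
    gcongr

end

theorem stmt4_general (n : ℕ) (Ω : Set (EuclideanSpace ℝ (Fin n)))
    (hΩ_open : IsOpen Ω) (hΩ_bd : Bornology.IsBounded Ω)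
    (R : ℝ) (hR : 0 < R)
    (hvol : volume (Metric.ball (0 : EuclideanSpace ℝ (Fin n)) R) = volume Ω) :
    (n / (n + 2) : ℝ) * R ^ 2 * (volume Ω).toReal
      ≤ ⨅ a : EuclideanSpace ℝ (Fin n), ∫ x in Ω, ‖x - a‖ ^ 2 := by
  refine le_ciInf fun a => ?_
  have hvol_a : volume (ball a R) = volume Ω := by rw [Measure.addHaar_ball_center, hvol]
  calc (n / (n + 2) : ℝ) * R ^ 2 * (volume Ω).toReal
      = ∫ x in ball a R, ‖x - a‖ ^ 2 := by
        rw [integral_norm_sub_sq_ball volume a hR.le, finrank_euclideanSpace_fin, measureReal_def,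
          hvol_a]
    _ ≤ ∫ x in Ω, ‖x - a‖ ^ 2 :=
        integral_norm_sub_sq_ball_le volume hΩ_open.measurableSet hΩ_bd a hR.le hvol_a

theorem stmt4 (n : ℕ) (hn : 1 ≤ n) (Ω : Set (EuclideanSpace ℝ (Fin n)))
    (hΩ_open : IsOpen Ω) (hΩ_bd : Bornology.IsBounded Ω) (hΩ_pos : 0 < volume Ω)
    (R : ℝ) (hR : 0 < R)
    (hvol : volume (Metric.ball (0 : EuclideanSpace ℝ (Fin n)) R) = volume Ω) :
    (n / (n + 2) : ℝ) * R ^ 2 * (volume Ω).toReal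
      ≤ ⨅ a : EuclideanSpace ℝ (Fin n), ∫ x in Ω, ‖x - a‖ ^ 2 :=
  stmt4_general n Ω hΩ_open hΩ_bd R hR hvol
end

section
/- Let n ≥ 2, λ > 0, J₁ > 0, and let t₀ < √λ satisfy t₀ + J₁ > √λ and λ[(t₀+J₁)ⁿ − t₀ⁿ]/n = [(t₀+J₁)^(n+2) − t₀^(n+2)]/(n+2). Then t₀ < √λ − J₁/2. -/
/-!
Scaled by `n (n + 2)`, the balance condition says that `φ(r) = (n + 2) λ rⁿ - n r^(n + 2)`
takes the same value at `t₀` and `t₀ + J₁`. With `c = √λ`, `φ` decreases on `[c, ∞)` and falls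
off faster to the right of `c` than to the left: `φ (c + s) < φ (c - s)` for `s > 0`, because
`s ↦ φ (c + s) - φ (c - s)` vanishes at `0` and has derivative
`n (n + 2) s ((c - s)ⁿ⁻¹ (2c - s) - (c + s)ⁿ⁻¹ (2c + s)) < 0`. So if `c - t₀ ≤ t₀ + J₁ - c`,
then `φ (t₀ + J₁) ≤ φ (2c - t₀) < φ t₀`, contradicting the balance.
-/

open Real Set

/-- `n (n + 2) θ(r)` for the paper's `θ(r) = λ rⁿ / n - r^(n + 2) / (n + 2)`. -/
noncomputable def scaledTheta (n : ℕ) (lam r : ℝ) : ℝ :=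
  (n + 2) * lam * r ^ n - n * r ^ (n + 2)

section ScaledTheta

variable {n : ℕ}

theorem hasDerivAt_scaledTheta (hn : 0 < n) (lam r : ℝ) :
    HasDerivAt (scaledTheta n lam) (n * (n + 2) * r ^ (n - 1) * (lam - r ^ 2)) r := by
  have h : HasDerivAt (scaledTheta n lam)
      ((n + 2) * lam * (n * r ^ (n - 1)) - n * ((n + 2 : ℕ) * r ^ (n + 2 - 1))) r :=
    ((hasDerivAt_pow n r).const_mul _).sub ((hasDerivAt_pow (n + 2) r).const_mul _)
  refine h.congr_deriv ?_
  obtain ⟨k, rfl⟩ := Nat.exists_eq_add_of_lt hn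
  simp only [zero_add, Nat.add_sub_cancel, show k + 1 + 2 - 1 = k + 2 by omega]
  push_cast
  ring

theorem scaledTheta_eq_of_balance (hn : 0 < n) {lam a b : ℝ}
    (h : lam * (a ^ n - b ^ n) / n = (a ^ (n + 2) - b ^ (n + 2)) / (n + 2)) :
    scaledTheta n lam a = scaledTheta n lam b := by
  have hn' : (n : ℝ) ≠ 0 := by positivity
  field_simp at h
  unfold scaledTheta
  linarith

theorem strictAntiOn_scaledTheta (hn : 0 < n) {c : ℝ} (hc : 0 ≤ c) :
    StrictAntiOn (scaledTheta n (c ^ 2)) (Ici c) := by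
  refine strictAntiOn_of_deriv_neg (convex_Ici c)
    (fun r _ => (hasDerivAt_scaledTheta hn _ r).continuousAt.continuousWithinAt) ?_
  intro r hr
  rw [interior_Ici, mem_Ioi] at hr
  rw [(hasDerivAt_scaledTheta hn _ r).deriv]
  have hr0 : 0 < r := hc.trans_lt hr
  have hsq : c ^ 2 < r ^ 2 := pow_lt_pow_left₀ hr hc two_ne_zero
  exact mul_neg_of_pos_of_neg (by positivity) (by linarith)

theorem sub_pow_mul_lt_add_pow_mul (k : ℕ) {c s : ℝ} (hc : 0 < c) (hs : 0 < s) :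
    (c - s) ^ k * (2 * c - s) < (c + s) ^ k * (2 * c + s) := by
  have hbase : |c - s| ≤ c + s := abs_le.mpr ⟨by linarith, by linarith⟩
  have hfactor : |2 * c - s| < 2 * c + s := abs_lt.mpr ⟨by linarith, by linarith⟩
  calc (c - s) ^ k * (2 * c - s) ≤ |c - s| ^ k * |2 * c - s| := by
        rw [← abs_pow, ← abs_mul]; exact le_abs_self _
    _ ≤ (c + s) ^ k * |2 * c - s| := by gcongr
    _ < (c + s) ^ k * (2 * c + s) := by gcongr

theorem scaledTheta_add_lt_sub (hn : 0 < n) {c s : ℝ} (hc : 0 < c) (hs : 0 < s) :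
    scaledTheta n (c ^ 2) (c + s) < scaledTheta n (c ^ 2) (c - s) := by
  let φ := scaledTheta n (c ^ 2)
  have hderiv : ∀ s : ℝ, HasDerivAt (fun s => φ (c + s) - φ (c - s))
      (n * (n + 2) * s * ((c - s) ^ (n - 1) * (2 * c - s) - (c + s) ^ (n - 1) * (2 * c + s))) s := by
    intro s
    have h := ((hasDerivAt_scaledTheta hn (c ^ 2) (c + s)).comp s ((hasDerivAt_id s).const_add c)).sub
      ((hasDerivAt_scaledTheta hn (c ^ 2) (c - s)).comp s ((hasDerivAt_id s).const_sub c))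
    refine h.congr_deriv ?_
    ring
  have hanti : StrictAntiOn (fun s => φ (c + s) - φ (c - s)) (Ici 0) := by
    refine strictAntiOn_of_deriv_neg (convex_Ici 0)
      (fun s _ => (hderiv s).continuousAt.continuousWithinAt) ?_
    intro s hs
    rw [interior_Ici, mem_Ioi] at hs
    rw [(hderiv s).deriv]
    exact mul_neg_of_pos_of_neg (by positivity)
      (sub_neg.mpr (sub_pow_mul_lt_add_pow_mul _ hc hs))
  have h := hanti self_mem_Ici hs.le hs
  simp only [add_zero, sub_zero, sub_self] at h
  exact sub_neg.mp h

end ScaledTheta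

theorem stmt9_general (n : ℕ) (hn : 2 ≤ n) (lam J₁ t₀ : ℝ) (hlam : 0 < lam)
    (ht1 : t₀ < Real.sqrt lam) (ht2 : Real.sqrt lam < t₀ + J₁)
    (ht3 : lam * ((t₀ + J₁) ^ n - t₀ ^ n) / n
        = ((t₀ + J₁) ^ (n + 2) - t₀ ^ (n + 2)) / (n + 2)) :
    t₀ < Real.sqrt lam - J₁ / 2 := by
  have hn0 : 0 < n := by omega
  set c := Real.sqrt lam
  have hc : 0 < c := Real.sqrt_pos.mpr hlam
  rw [← Real.sq_sqrt hlam.le] at ht3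
  have hbalance := scaledTheta_eq_of_balance hn0 ht3
  by_contra! hfar
  have hright : scaledTheta n (c ^ 2) (t₀ + J₁) ≤ scaledTheta n (c ^ 2) (c + (c - t₀)) :=
    (strictAntiOn_scaledTheta hn0 hc.le).antitoneOn (mem_Ici.mpr (by linarith)) (mem_Ici.mpr (by linarith))
      (by linarith)
  have hleft := scaledTheta_add_lt_sub hn0 hc (sub_pos.mpr ht1)
  rw [sub_sub_cancel] at hleft
  linarith

theorem stmt9 (n : ℕ) (hn : 2 ≤ n) (lam J₁ t₀ : ℝ) (hlam : 0 < lam) (hJ : 0 < J₁)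
    (ht1 : t₀ < Real.sqrt lam) (ht2 : Real.sqrt lam < t₀ + J₁)
    (ht3 : lam * ((t₀ + J₁) ^ n - t₀ ^ n) / n
        = ((t₀ + J₁) ^ (n + 2) - t₀ ^ (n + 2)) / (n + 2)) :
    t₀ < Real.sqrt lam - J₁ / 2 :=
  stmt9_general n hn lam J₁ t₀ hlam ht1 ht2 ht3
end
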